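/- arXiv:1809.06322 — 2 statements merged into one kernel-verified Lean document; each statement's English description precedes it below -/
import Mathlib

section
/- In any cyclic operad P, for x with ‖x‖ = n and y with ‖y‖ = m with the composition defined, (τ_{n+m}^i)^*(x ∘_i^j y) = ((τ_{n+1}^i)^* x) ∘_0^j y. -/
open CategoryTheory MonoidalCategory

universe w v u

/-- The profile `c̄ σ = c_{σ(0)}, …, c_{σ(n)}` obtained by permuting a profile (a list). -/
def permuteList {C : Type u} (c : List C) {n : ℕ} (h : c.length = n)
    (σ : Equiv.Perm (Fin n)) : List C :=
  List.ofFn fun k => c.get (Fin.cast h.symm (σ k))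

/-- The composite profile `c̄ ∘_i^j d̄ = c_0,…,c_{i-1}, d_{j+1},…,d_m, d_0,…,d_{j-1},
c_{i+1},…,c_n`. -/
def profComp {C : Type u} (c d : List C) (i j : ℕ) : List C :=
  c.take i ++ (d.drop (j + 1) ++ (d.take j ++ c.drop (i + 1)))

/-- The helper function `α_{i,m}` : identity on `[0,i-1]`, `x ↦ x - 1 + m` on `[i+1,n]`. -/
def alphaN (i m x : ℕ) : ℕ := if x < i then x else x + m - 1

/-- The helper function `β_{j,i}` : `x ↦ x + m - j + i` on `[0,j-1]`, `x ↦ x - j - 1 + i`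
on `[j+1,m]`. -/
def betaN (m j i x : ℕ) : ℕ := if x < j then x + m + i - j else x + i - j - 1

/-- The underlying data of a (colored) cyclic operad in a monoidal category `V`, *without*
identity elements: an involutive color set, objects `P(c_0,…,c_n)` of `V` indexed by
profiles, a right action of `Σ_n^+ = Aut([0,n])`, and composition operations `∘_i^j`
defined when `c_i = d_j^†`. -/
structure VCycDataNU (C : Type u) (V : Type v) [Category.{w} V] [MonoidalCategory V] where
  dag : C → C
  dag_invol : Function.Involutive dag
  P : List C → V
  act : ∀ {c : List C} {n : ℕ} (h : c.length = n) (σ : Equiv.Perm (Fin n)),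
    P c ⟶ P (permuteList c h σ)
  comp : ∀ {c d : List C} (i j : ℕ) (hi : i < c.length) (hj : j < d.length),
    c.get ⟨i, hi⟩ = dag (d.get ⟨j, hj⟩) → (P c ⊗ P d ⟶ P (profComp c d i j))

/-- The underlying data of a (colored) cyclic operad in `V`: the non-unital data together
with identity elements `id_c : 𝟙_V → P(c^†, c)`. -/
structure VCycData (C : Type u) (V : Type v) [Category.{w} V] [MonoidalCategory V] extends
    VCycDataNU C V where
  ident : ∀ c : C, (𝟙_ V ⟶ P [dag c, c])

variable {C : Type u} {V : Type v} [Category.{w} V] [MonoidalCategory V] [SymmetricCategory V]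

/-- Axioms (C.1), (C.2), (C.3) of a cyclic operad (together with functoriality of the
symmetric group actions): a *non-unital Markl cyclic operad*. -/
structure IsVMarkl (D : VCycDataNU C V) : Prop where
  act_one : ∀ {c : List C} {n : ℕ} (h : c.length = n) (hl : permuteList c h 1 = c),
    D.act h 1 = eqToHom (congrArg D.P hl.symm)
  act_mul : ∀ {c : List C} {n : ℕ} (h : c.length = n) (σ σ' : Equiv.Perm (Fin n))
    (h2 : (permuteList c h σ).length = n)
    (hl : permuteList (permuteList c h σ) h2 σ' = permuteList c h (σ * σ')),
    D.act h σ ≫ D.act h2 σ' = D.act h (σ * σ') ≫ eqToHom (congrArg D.P hl.symm)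
  /- (C.1): `(τ^{m-j+i})^* (x ∘_i^j y) = y ∘_j^i x`. -/
  swap : ∀ {c d : List C} (i j : ℕ) (hi : i < c.length) (hj : j < d.length)
    (hcd : c.get ⟨i, hi⟩ = D.dag (d.get ⟨j, hj⟩))
    (hdc : d.get ⟨j, hj⟩ = D.dag (c.get ⟨i, hi⟩))
    (hlen : (profComp c d i j).length = c.length + d.length - 2)
    (hl : permuteList (profComp c d i j) hlen
        ((finRotate (c.length + d.length - 2)) ^ (d.length - 1 - j + i)) = profComp d c j i),
    D.comp i j hi hj hcd ≫
        D.act hlen ((finRotate (c.length + d.length - 2)) ^ (d.length - 1 - j + i)) ≫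
        eqToHom (congrArg D.P hl)
      = (β_ (D.P c) (D.P d)).hom ≫ D.comp j i hj hi hdc
  /- (C.2): `(x ∘_i^j y) ∘_{β_{j,i}(k)}^{l} z = x ∘_i^{α_{k,p}(j)} (y ∘_k^l z)` for `k ≠ j`,
  whenever the indicated compositions are defined. -/
  assoc : ∀ {c d e : List C} (i j k l : ℕ) (hi : i < c.length) (hj : j < d.length)
    (hk : k < d.length) (hl : l < e.length) (_ : k ≠ j)
    (h1 : c.get ⟨i, hi⟩ = D.dag (d.get ⟨j, hj⟩))
    (h2 : d.get ⟨k, hk⟩ = D.dag (e.get ⟨l, hl⟩))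
    (hb : betaN (d.length - 1) j i k < (profComp c d i j).length)
    (hcol1 : (profComp c d i j).get ⟨betaN (d.length - 1) j i k, hb⟩ = D.dag (e.get ⟨l, hl⟩))
    (ha : alphaN k (e.length - 1) j < (profComp d e k l).length)
    (hcol2 : c.get ⟨i, hi⟩ = D.dag ((profComp d e k l).get ⟨alphaN k (e.length - 1) j, ha⟩))
    (hlist : profComp c (profComp d e k l) i (alphaN k (e.length - 1) j)
      = profComp (profComp c d i j) e (betaN (d.length - 1) j i k) l),
    (D.comp i j hi hj h1 ▷ D.P e) ≫ D.comp (betaN (d.length - 1) j i k) l hb hl hcol1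
      = (α_ (D.P c) (D.P d) (D.P e)).hom ≫ (D.P c ◁ D.comp k l hk hl h2) ≫
          D.comp i (alphaN k (e.length - 1) j) hi ha hcol2 ≫ eqToHom (congrArg D.P hlist)
  /- (C.3): `(σ₁^* x) ∘_i^j (σ₂^* y) = σ^* (x ∘_{σ₁(i)}^{σ₂(j)} y)` where `σ` is determined
  by `σ ∘ (α_{i,m} ⊔ β_{j,i}) = (α_{σ₁(i),m} ⊔ β_{σ₂(j),σ₁(i)}) ∘ (σ₁ ⊔ σ₂)`. -/
  equiv : ∀ {c d : List C} {nc nd : ℕ} (h1 : c.length = nc) (h2 : d.length = nd)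
    (σ₁ : Equiv.Perm (Fin nc)) (σ₂ : Equiv.Perm (Fin nd)) (i : Fin nc) (j : Fin nd)
    (σ : Equiv.Perm (Fin (nc + nd - 2)))
    (_ : ∀ (x : Fin nc), x ≠ i → ∀ (hax : alphaN i.val (nd - 1) x.val < nc + nd - 2),
      (σ ⟨alphaN i.val (nd - 1) x.val, hax⟩).val = alphaN (σ₁ i).val (nd - 1) (σ₁ x).val)
    (_ : ∀ (x : Fin nd), x ≠ j → ∀ (hbx : betaN (nd - 1) j.val i.val x.val < nc + nd - 2),
      (σ ⟨betaN (nd - 1) j.val i.val x.val, hbx⟩).val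
        = betaN (nd - 1) (σ₂ j).val (σ₁ i).val (σ₂ x).val)
    (hip : i.val < (permuteList c h1 σ₁).length) (hjp : j.val < (permuteList d h2 σ₂).length)
    (hcolp : (permuteList c h1 σ₁).get ⟨i.val, hip⟩
      = D.dag ((permuteList d h2 σ₂).get ⟨j.val, hjp⟩))
    (hi0 : (σ₁ i).val < c.length) (hj0 : (σ₂ j).val < d.length)
    (hcol0 : c.get ⟨(σ₁ i).val, hi0⟩ = D.dag (d.get ⟨(σ₂ j).val, hj0⟩))
    (hlen : (profComp c d (σ₁ i).val (σ₂ j).val).length = nc + nd - 2)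
    (hlist : permuteList (profComp c d (σ₁ i).val (σ₂ j).val) hlen σ
      = profComp (permuteList c h1 σ₁) (permuteList d h2 σ₂) i.val j.val),
    (D.act h1 σ₁ ⊗ₘ D.act h2 σ₂) ≫ D.comp i.val j.val hip hjp hcolp
      = D.comp (σ₁ i).val (σ₂ j).val hi0 hj0 hcol0 ≫ D.act hlen σ ≫
          eqToHom (congrArg D.P hlist)

/-- The axioms (C.1)–(C.4) of a (colored) cyclic operad in `V`. -/
structure IsVCyc (D : VCycData C V) : Prop where
  markl : IsVMarkl D.toVCycDataNU
  /- (C.4), first half: `x ∘_i^1 id_c = x`. -/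
  unit : ∀ {c : List C} (i : ℕ) (hi : i < c.length) (cc : C)
    (h2 : 1 < ([D.dag cc, cc] : List C).length)
    (hcol : c.get ⟨i, hi⟩ = D.dag (([D.dag cc, cc] : List C).get ⟨1, h2⟩))
    (hlist : c = profComp c [D.dag cc, cc] i 1),
    (ρ_ (D.P c)).inv ≫ (D.P c ◁ D.ident cc) ≫ D.comp i 1 hi h2 hcol
      = eqToHom (congrArg D.P hlist)
  /- (C.4), second half: `τ^* id_c = id_{c^†}`. -/
  tau_ident : ∀ (cc : C) (h : ([D.dag cc, cc] : List C).length = 2)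
    (hl : permuteList [D.dag cc, cc] h (finRotate 2) = [D.dag (D.dag cc), D.dag cc]),
    D.ident cc ≫ D.act h (finRotate 2) = D.ident (D.dag cc) ≫ eqToHom (congrArg D.P hl.symm)

/-!
The identity is the instance `σ₁ = τ^i`, `σ₂ = id`, `i = 0` of the equivariance axiom (C.3).
The permutation `σ` that (C.3) then asks for is `τ_{n+m}^i`: rotating by `i` carries the block
shifts `α_{0,m}` and `β_{j,0}` to `α_{i,m}` and `β_{j,i}`. What remains is this modular
arithmetic and transport along equalities of profiles.
-/

theorem coe_finRotate_pow {n : ℕ} (k : ℕ) (x : Fin n) :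
    ((finRotate n ^ k) x : ℕ) = (x + k) % n := by
  cases n with
  | zero => exact x.elim0
  | succ n =>
    induction k with
    | zero => simp [Nat.mod_eq_of_lt x.isLt]
    | succ k ih =>
      rw [pow_succ', Equiv.Perm.mul_apply, finRotate_apply, Fin.val_add, ih, Fin.val_one',
        Nat.add_mod_mod, Nat.mod_add_mod, add_assoc]

theorem finRotate_pow_alphaN {n m i : ℕ} (hm : 0 < m) (hi : i < n) (x : Fin n)
    (hx : x ≠ ⟨0, by omega⟩) (hax : alphaN 0 (m - 1) x < n + m - 2) :
    ((finRotate (n + m - 2) ^ i) ⟨alphaN 0 (m - 1) x, hax⟩ : ℕ)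
      = alphaN i (m - 1) ((finRotate n ^ i) x) := by
  have hx0 : 0 < (x : ℕ) := Nat.pos_of_ne_zero fun h => hx (Fin.ext h)
  have hxn := x.isLt
  rw [coe_finRotate_pow, coe_finRotate_pow]
  simp only [alphaN, Nat.not_lt_zero, if_false]
  rcases lt_or_ge (x + i) n with hxi | hxi
  · have h : x + (m - 1) - 1 + i < n + m - 2 := by omega
    rw [Nat.mod_eq_of_lt hxi, if_neg (by omega), Nat.mod_eq_of_lt h]
    omega
  · have h₁ : (x + i) % n = x + i - n := by
      rw [Nat.mod_eq_sub_mod hxi, Nat.mod_eq_of_lt (by omega)]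
    have h₂ : (x + (m - 1) - 1 + i) % (n + m - 2) = x + i - n := by
      rw [Nat.mod_eq_sub_mod (by omega), Nat.mod_eq_of_lt (by omega)]
      omega
    rw [h₁, h₂, if_pos (by omega)]

theorem finRotate_pow_betaN {n m i j : ℕ} (hi : i < n) (hj : j < m) (x : Fin m)
    (hx : (x : ℕ) ≠ j)
    (hbx : betaN (m - 1) j 0 x < n + m - 2) :
    ((finRotate (n + m - 2) ^ i) ⟨betaN (m - 1) j 0 x, hbx⟩ : ℕ) = betaN (m - 1) j i x := by
  have hxm := x.isLt
  rw [coe_finRotate_pow]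
  unfold betaN
  split_ifs
  · rw [Nat.mod_eq_of_lt (show x + (m - 1) + 0 - j + i < n + m - 2 by omega)]
    omega
  · rw [Nat.mod_eq_of_lt (show x + 0 - j - 1 + i < n + m - 2 by omega)]
    omega

theorem permuteList_one {C : Type u} (c : List C) :
    permuteList c rfl (1 : Equiv.Perm (Fin c.length)) = c := by
  simp [permuteList]

theorem VCycDataNU.comp_eqToHom_right {C : Type u} {V : Type v} [Category.{w} V]
    [MonoidalCategory V] (D : VCycDataNU C V) {c d d' : List C} (hd : d' = d) (i j : ℕ)
    (hi : i < c.length) (hj' : j < d'.length) (hj : j < d.length)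
    (hcol' : c.get ⟨i, hi⟩ = D.dag (d'.get ⟨j, hj'⟩))
    (hcol : c.get ⟨i, hi⟩ = D.dag (d.get ⟨j, hj⟩)) :
    D.comp i j hi hj' hcol' = (D.P c ◁ eqToHom (congrArg D.P hd)) ≫ D.comp i j hi hj hcol ≫
      eqToHom (congrArg D.P (by rw [hd])) := by
  subst hd; simp

namespace IsVMarkl

variable {D : VCycDataNU C V}

theorem act_whiskerRight_comp (hD : IsVMarkl D) {c d : List C} (σ₁ : Equiv.Perm (Fin c.length))
    (σ : Equiv.Perm (Fin (c.length + d.length - 2))) (i : Fin c.length) {i' j : ℕ}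
    (hσ₁i : (σ₁ i : ℕ) = i') (hj : j < d.length)
    (hα : ∀ x : Fin c.length, x ≠ i →
      ∀ hax : alphaN i (d.length - 1) x < c.length + d.length - 2,
      (σ ⟨_, hax⟩ : ℕ) = alphaN i' (d.length - 1) (σ₁ x))
    (hβ : ∀ x : Fin d.length, (x : ℕ) ≠ j →
      ∀ hbx : betaN (d.length - 1) j i x < c.length + d.length - 2,
      (σ ⟨_, hbx⟩ : ℕ) = betaN (d.length - 1) j i' x)
    (hip : (i : ℕ) < (permuteList c rfl σ₁).length)
    (hcolp : (permuteList c rfl σ₁).get ⟨i, hip⟩ = D.dag (d.get ⟨j, hj⟩))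
    (hi' : i' < c.length) (hcol : c.get ⟨i', hi'⟩ = D.dag (d.get ⟨j, hj⟩))
    (hlen : (profComp c d i' j).length = c.length + d.length - 2)
    (hlist : profComp (permuteList c rfl σ₁) d i j = permuteList (profComp c d i' j) hlen σ) :
    (D.act rfl σ₁ ▷ D.P d) ≫ D.comp i j hip hj hcolp =
      D.comp i' j hi' hj hcol ≫ D.act hlen σ ≫ eqToHom (congrArg D.P hlist.symm) := by
  subst hσ₁i
  have hd := permuteList_one d
  have hjp : j < (permuteList d rfl 1).length := by rwa [hd]
  have hcolp' : (permuteList c rfl σ₁).get ⟨i, hip⟩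
      = D.dag ((permuteList d rfl 1).get ⟨j, hjp⟩) := by
    rw [List.get_of_eq hd]; exact hcolp
  have key := hD.equiv rfl rfl σ₁ 1 i ⟨j, hj⟩ σ hα
    (fun x hx => hβ x fun h => hx (Fin.ext h)) hip hjp hcolp' hi' hj hcol hlen
    (by rw [hd]; exact hlist.symm)
  rw [hD.act_one rfl hd, D.comp_eqToHom_right hd i j hip hjp hj hcolp' hcolp] at key
  simp only [MonoidalCategory.tensorHom_def, MonoidalCategory.whiskerLeft_eqToHom,
    Category.assoc, eqToHom_trans_assoc, eqToHom_refl, Category.id_comp] at key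
  rw [← Category.assoc, comp_eqToHom_iff] at key
  rw [key]
  simp only [Category.assoc, eqToHom_trans]
  rfl

end IsVMarkl

/-- in any cyclic operad, `(τ_{n+m}^i)^*(x ∘_i^j y) = ((τ_{n+1}^i)^* x) ∘_0^j y`
(where `‖x‖ = n`, `‖y‖ = m`, so `c̄` has length `n+1`, `d̄` has length `m+1`, and the
composite has length `n+m = |c̄| + |d̄| - 2`). -/
theorem act_comp_eq_comp_act_zero {C : Type u} {V : Type v} [Category.{w} V]
    [MonoidalCategory V] [SymmetricCategory V]
    (D : VCycData C V) (_ : IsVCyc D) {c d : List C} (i j : ℕ)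
    (hi : i < c.length) (hj : j < d.length)
    (hcol : c.get ⟨i, hi⟩ = D.dag (d.get ⟨j, hj⟩))
    (hlen : (profComp c d i j).length = c.length + d.length - 2)
    (h0 : 0 < (permuteList c rfl ((finRotate c.length) ^ i)).length)
    (hcol' : (permuteList c rfl ((finRotate c.length) ^ i)).get ⟨0, h0⟩
      = D.dag (d.get ⟨j, hj⟩))
    (hlist : profComp (permuteList c rfl ((finRotate c.length) ^ i)) d 0 j
      = permuteList (profComp c d i j) hlen
          ((finRotate (c.length + d.length - 2)) ^ i)) :
    D.comp i j hi hj hcol ≫ D.act hlen ((finRotate (c.length + d.length - 2)) ^ i)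
      = (D.act rfl ((finRotate c.length) ^ i) ▷ D.P d) ≫ D.comp 0 j h0 hj hcol' ≫
          eqToHom (congrArg D.P hlist) := by
  have hpos : 0 < c.length := by omega
  have hrot : ((finRotate c.length ^ i) ⟨0, hpos⟩ : ℕ) = i := by
    rw [coe_finRotate_pow, zero_add, Nat.mod_eq_of_lt hi]
  have key := ‹IsVCyc D›.markl.act_whiskerRight_comp _ _ ⟨0, hpos⟩ hrot hj
    (finRotate_pow_alphaN (by omega) hi) (finRotate_pow_betaN hi hj) h0 hcol' hi hcol hlen hlist
  simpa using key.symm =≫ eqToHom (congrArg D.P hlist)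
end

section
/- For any monoidal unit map f : A ⊗ B → C in a closed symmetric monoidal category with initial object ∅, the {c, c†}-colored collection P with P(c) = A, P(c†) = B, P() = C, and ∅ otherwise, equipped with ∘_0^0 : P(c) ⊗ P(c†) → P() given by f, ∘_0^0 : P(c†) ⊗ P(c) → P() given by f precomposed with the symmetry, and all other compositions the unique maps from ∅, is a non-unital cyclic operad (i.e., satisfies axioms C.1–C.3). -/
open CategoryTheory MonoidalCategory

universe w v u

variable {C : Type u} {V : Type v} [Category.{w} V] [MonoidalCategory V] [SymmetricCategory V]

section Pairings

open Limits

variable {V : Type v} [Category.{w} V] [MonoidalCategory V] [SymmetricCategory V]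
  [MonoidalClosed V] [HasInitial V]

/-- The underlying collection of the pairing cyclic operad: colors `{c, c†}` are encoded
by `Bool` (with `c = false`, `c† = true` and free involution `!`), and
`P(c) = A`, `P(c†) = B`, `P() = C`, with all other operation objects initial. -/
noncomputable def pairingP (A B Cc : V) : List Bool → V := fun l =>
  match l with
  | [] => Cc
  | [b] => cond b B A
  | _ => ⊥_ V

private lemma permuteList_small {α : Type u} (l : List α) {n : ℕ} (h : l.length = n)
    (σ : Equiv.Perm (Fin n)) (hn : n ≤ 1) : permuteList l h σ = l := by
  have hz : ∀ z : Fin n, z.val = 0 := fun z => Nat.lt_one_iff.mp (lt_of_lt_of_le z.isLt hn)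
  have hσ : σ = 1 := by
    ext k
    rw [show σ k = k from Fin.ext ((hz (σ k)).trans (hz k).symm)]
    rfl
  subst hσ
  subst h
  rcases l with _ | ⟨a, _ | ⟨b, t⟩⟩
  · rfl
  · simp [permuteList]
  · simp at hn

/-- The pairing data: `∘_0^0 : P(c) ⊗ P(c†) → P()` is `f : A ⊗ B → C`,
`∘_0^0 : P(c†) ⊗ P(c) → P()` is `f` precomposed with the symmetry, and all the other
compositions are the unique maps out of (tensor factors that are) initial objects. -/
noncomputable def pairingData (A B Cc : V) (f : A ⊗ B ⟶ Cc) : VCycDataNU Bool V where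
  dag := Bool.not
  dag_invol := by intro b; cases b <;> rfl
  P := pairingP A B Cc
  act := fun {c n} h σ => by
    rcases c with _ | ⟨a, _ | ⟨b, t⟩⟩
    · exact eqToHom (congrArg (pairingP A B Cc)
        (permuteList_small [] h σ (by simp at h; omega)).symm)
    · exact eqToHom (congrArg (pairingP A B Cc)
        (permuteList_small [a] h σ (by simp at h; omega)).symm)
    · -- profiles of length ≥ 2: the operation object is initial
      have h2 : 2 ≤ n := by simp at h; omega
      rcases hpl : permuteList (a :: b :: t) h σ with _ | ⟨x, _ | ⟨y, s⟩⟩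
      · exfalso
        have := congrArg List.length hpl
        simp [permuteList] at this
        omega
      · exfalso
        have := congrArg List.length hpl
        simp [permuteList] at this
        omega
      · exact initial.to _
  comp := fun {c d} i j hi hj hcol => by
    rcases c with _ | ⟨a, _ | ⟨b, t⟩⟩
    · simp at hi
    · rcases d with _ | ⟨a', _ | ⟨b', t'⟩⟩
      · simp at hj
      · -- the main case: two single-color profiles
        simp only [List.length_cons, List.length_nil] at hi hj
        interval_cases i <;> interval_cases j
        simp only [List.get] at hcol
        rcases a with _ | _ <;> rcases a' with _ | _
        · exact absurd hcol (by simp)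
        · -- `P(c) ⊗ P(c†) → P()` is `f`
          exact f
        · -- `P(c†) ⊗ P(c) → P()` is `f` precomposed with the symmetry
          exact (β_ B A).hom ≫ f
        · exact absurd hcol (by simp)
      · -- second factor initial
        show pairingP A B Cc [a] ⊗ (⊥_ V) ⟶
          pairingP A B Cc (profComp [a] (a' :: b' :: t') i j)
        exact MonoidalClosed.uncurry (initial.to _)
    · -- first factor initial: compose with the symmetry first
      show (⊥_ V) ⊗ pairingP A B Cc d ⟶ pairingP A B Cc (profComp (a :: b :: t) d i j)
      exact (β_ _ _).hom ≫ MonoidalClosed.uncurry (initial.to _)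

end Pairings

/-! Every profile of length at least two carries the initial object `∅`, and `X ⊗ ∅ ≅ ∅`
because `X ⊗ -` is a left adjoint in a closed category; so every instance of an axiom whose
source involves such a profile holds trivially. This covers all of (C.2), whose middle operation
has the two distinct inputs `j ≠ k`. What is left are the actions on profiles of length at most
one, which are identities, and (C.1) for `∘_0^0 : P(c) ⊗ P(c†) → P()`, which is the symmetry
`β_{A,B} ≫ β_{B,A} = 𝟙`. -/

section InitialTensor

open Limits

variable {V : Type v} [Category.{w} V] [MonoidalCategory V] [MonoidalClosed V]

noncomputable def CategoryTheory.Limits.IsInitial.tensorLeft (X : V) {I : V}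
    (hI : IsInitial I) : IsInitial (X ⊗ I) :=
  letI := (ihom.adjunction X).leftAdjoint_preservesColimits
  hI.isInitialObj (MonoidalCategory.tensorLeft X) I

noncomputable def CategoryTheory.Limits.IsInitial.tensorRight [BraidedCategory V] (X : V)
    {I : V} (hI : IsInitial I) : IsInitial (I ⊗ X) :=
  (hI.tensorLeft X).ofIso (β_ X I)

end InitialTensor

theorem List.exists_eq_singletons_or_two_le_length {α : Type u} {c d : List α}
    (hc : 0 < c.length) (hd : 0 < d.length) :
    (∃ a b, c = [a] ∧ d = [b]) ∨ 2 ≤ c.length ∨ 2 ≤ d.length := by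
  rcases c with _ | ⟨a, _ | ⟨a', c⟩⟩ <;> rcases d with _ | ⟨b, _ | ⟨b', d⟩⟩ <;> simp_all

theorem VCycDataNU.comp_congr {C : Type u} {V : Type v} [Category.{w} V] [MonoidalCategory V]
    (D : VCycDataNU C V) {c c' d d' : List C} (hc : c' = c) (hd : d' = d) {i i' j j' : ℕ}
    (hii : i' = i) (hjj : j' = j) (hi' : i' < c'.length) (hj' : j' < d'.length)
    (hcol' : c'.get ⟨i', hi'⟩ = D.dag (d'.get ⟨j', hj'⟩)) (hi : i < c.length)
    (hj : j < d.length) (hcol : c.get ⟨i, hi⟩ = D.dag (d.get ⟨j, hj⟩)) :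
    D.comp i' j' hi' hj' hcol' = eqToHom (by rw [hc, hd]) ≫ D.comp i j hi hj hcol ≫
      eqToHom (by rw [hc, hd, hii, hjj]) := by
  subst hc hd hii hjj
  simp

section PairingCollection

open Limits

variable {V : Type v} [Category.{w} V] [HasInitial V]

theorem pairingP_of_two_le_length (A B Cc : V) {l : List Bool} (hl : 2 ≤ l.length) :
    pairingP A B Cc l = ⊥_ V := by
  rcases l with _ | ⟨a, _ | ⟨b, t⟩⟩
  · simp at hl
  · simp at hl
  · rfl

noncomputable def isInitialPairingP (A B Cc : V) {l : List Bool} (hl : 2 ≤ l.length) :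
    IsInitial (pairingP A B Cc l) :=
  initialIsInitial.ofIso (eqToIso (pairingP_of_two_le_length A B Cc hl).symm)

end PairingCollection

section Pairings

open Limits

variable {V : Type v} [Category.{w} V] [MonoidalCategory V] [SymmetricCategory V]
  [MonoidalClosed V] [HasInitial V]

theorem pairingData_P_permuteList (A B Cc : V) (f : A ⊗ B ⟶ Cc) (l : List Bool) {n : ℕ}
    (h : l.length = n) (σ : Equiv.Perm (Fin n)) :
    (pairingData A B Cc f).P (permuteList l h σ) = (pairingData A B Cc f).P l := by
  show pairingP A B Cc _ = pairingP A B Cc _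
  rcases Nat.lt_or_ge n 2 with hn | hn
  · rw [permuteList_small l h σ (by omega)]
  · have hlen : (permuteList l h σ).length = n := by simp [permuteList]
    rw [pairingP_of_two_le_length A B Cc (by omega), pairingP_of_two_le_length A B Cc (by omega)]

theorem pairingData_act (A B Cc : V) (f : A ⊗ B ⟶ Cc) {c : List Bool} {n : ℕ}
    (h : c.length = n) (σ : Equiv.Perm (Fin n)) :
    (pairingData A B Cc f).act h σ = eqToHom (pairingData_P_permuteList A B Cc f c h σ).symm := by
  rcases c with _ | ⟨a, _ | ⟨b, t⟩⟩
  · rfl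
  · rfl
  · exact initialIsInitial.hom_ext _ _

noncomputable def isInitialPairingPTensor (A B Cc : V) {c d : List Bool}
    (h : 2 ≤ c.length ∨ 2 ≤ d.length) : IsInitial (pairingP A B Cc c ⊗ pairingP A B Cc d) :=
  h.by_cases (fun hc => (isInitialPairingP A B Cc hc).tensorRight _)
    (fun hd => (isInitialPairingP A B Cc hd).tensorLeft _)

theorem pairingData_tensor_hom_ext (A B Cc : V) (f : A ⊗ B ⟶ Cc) {c d : List Bool}
    (h : 2 ≤ c.length ∨ 2 ≤ d.length) {X : V}
    (g g' : (pairingData A B Cc f).P c ⊗ (pairingData A B Cc f).P d ⟶ X) : g = g' :=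
  (isInitialPairingPTensor A B Cc h).hom_ext g g'

theorem pairingData_comp_swap (A B Cc : V) (f : A ⊗ B ⟶ Cc) (a b : Bool) (hab : a = !b)
    (hba : b = !a)
    (h : (pairingData A B Cc f).P (profComp [a] [b] 0 0)
      = (pairingData A B Cc f).P (profComp [b] [a] 0 0)) :
    (pairingData A B Cc f).comp (c := [a]) (d := [b]) 0 0 (by simp) (by simp) hab ≫ eqToHom h
      = (β_ _ _).hom ≫
        (pairingData A B Cc f).comp (c := [b]) (d := [a]) 0 0 (by simp) (by simp) hba := by
  cases a <;> cases b <;> simp at hab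
  · show f ≫ 𝟙 Cc = (β_ A B).hom ≫ (β_ B A).hom ≫ f
    rw [Category.comp_id, SymmetricCategory.symmetry_assoc]
  · show ((β_ B A).hom ≫ f) ≫ 𝟙 Cc = (β_ B A).hom ≫ f
    exact Category.comp_id _

/-- for any map `f : A ⊗ B → C` in a closed symmetric monoidal category
with initial object `∅`, the `{c, c†}`-colored collection with `P(c) = A`, `P(c†) = B`,
`P() = C` and `∅` otherwise, with `∘_0^0 : P(c) ⊗ P(c†) → P()` given by `f`,
`∘_0^0 : P(c†) ⊗ P(c) → P()` given by `f` precomposed with the symmetry, and all other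
compositions the unique maps from `∅`, is a non-unital (Markl) cyclic operad, i.e. it
satisfies axioms (C.1)–(C.3). -/
theorem pairingData_isMarkl (A B Cc : V) (f : A ⊗ B ⟶ Cc) :
    IsVMarkl (pairingData A B Cc f) := by
  constructor
  case act_one => exact fun h _ => pairingData_act A B Cc f h 1
  case act_mul => exact fun _ _ _ _ _ => by simp only [pairingData_act, eqToHom_trans]
  case swap =>
    intro c d i j hi hj hcd hdc _ _
    obtain ⟨a, b, rfl, rfl⟩ | hlong :=
      List.exists_eq_singletons_or_two_le_length (Nat.zero_lt_of_lt hi) (Nat.zero_lt_of_lt hj)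
    · obtain rfl : i = 0 := by simpa using hi
      obtain rfl : j = 0 := by simpa using hj
      rw [pairingData_act, eqToHom_trans]
      exact pairingData_comp_swap A B Cc f a b hcd hdc _
    · exact pairingData_tensor_hom_ext A B Cc f hlong _ _
  case assoc =>
    intro _ _ _ _ j k _ _ hj hk _ hkj _ _ _ _ _ _ _
    exact ((isInitialPairingPTensor A B Cc (.inr (by omega))).tensorRight _).hom_ext _ _
  case equiv =>
    intro c d nc nd h1 h2 σ₁ σ₂ i j _ _ _ hip hjp hcolp hi0 hj0 hcol0 _ _
    obtain ⟨a, b, rfl, rfl⟩ | hlong :=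
      List.exists_eq_singletons_or_two_le_length (h1 ▸ i.pos) (h2 ▸ j.pos)
    · obtain rfl : nc = 1 := by simpa using h1.symm
      obtain rfl : nd = 1 := by simpa using h2.symm
      rw [pairingData_act, pairingData_act, pairingData_act,
        (pairingData A B Cc f).comp_congr (permuteList_small [a] h1 σ₁ le_rfl)
          (permuteList_small [b] h2 σ₂ le_rfl) (i := (σ₁ i).val) (j := (σ₂ j).val)
          (by omega) (by omega) hip hjp hcolp hi0 hj0 hcol0]
      simp [MonoidalCategory.tensorHom_def]
    · exact pairingData_tensor_hom_ext A B Cc f hlong _ _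

end Pairings
end
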